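/- arXiv:1705.01589 — 6 statements merged into one kernel-verified Lean document; each statement's English description precedes it below -/
import Mathlib

section
/- Let n ≥ 1 and let m be a perfect matching between n boys and n girls. Let rev : {1,…,n} → {1,…,n} be the order-reversing involution rev(i) = n+1−i, and define the transposed matching m̄ = rev ∘ m ∘ rev (also a bijection from boys to girls). Then for every boy j ∈ {1,…,n}, boy j is satisfied under m if and only if girl rev(m(j)) = m̄(rev(j)) is satisfied under m̄. -/
/-- Girls and boys are indexed by `Fin n` in decreasing order of preference
(index `0` is the most preferred).  A perfect matching is a permutation
`m : Equiv.Perm (Fin n)` sending boy `j` to girl `m j`.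
Girl `i` is satisfied under `m` if `m j < i` for every boy `j < m⁻¹ i`. -/
def girlSatisfied {n : ℕ} (m : Equiv.Perm (Fin n)) (i : Fin n) : Prop :=
  ∀ j : Fin n, j < m.symm i → m j < i

/-- Boy `j` is satisfied under `m` if `m⁻¹ i < j` for every girl `i < m j`. -/
def boySatisfied {n : ℕ} (m : Equiv.Perm (Fin n)) (j : Fin n) : Prop :=
  ∀ i : Fin n, i < m j → m.symm i < j

/-- Boy `j` is satisfied under `m` iff girl `rev (m j) = m̄ (rev j)` is satisfied
under the transposed matching `m̄ = rev ∘ m ∘ rev`. -/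
theorem boy_satisfied_iff_transposed_girl_satisfied
    (n : ℕ) (hn : 1 ≤ n) (m : Equiv.Perm (Fin n)) (j : Fin n) :
    boySatisfied m j ↔
      girlSatisfied (Fin.revPerm.trans (m.trans Fin.revPerm)) ((m j).rev) := by
  have hsymm : (Fin.revPerm.trans (m.trans Fin.revPerm)).symm ((m j).rev) = j.rev := by
    simp
  constructor
  · intro h k hk
    rw [hsymm] at hk
    have hjk : j < k.rev := by
      have : k.rev.rev < j.rev := by rw [Fin.rev_rev]; exact hk
      exact Fin.rev_lt_rev.mp this
    simp only [Equiv.trans_apply, Fin.revPerm_apply]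
    rw [Fin.rev_lt_rev]
    by_contra hle
    push_neg at hle
    rcases lt_or_eq_of_le hle with h1 | h1
    · have h2 := h _ h1
      rw [Equiv.symm_apply_apply] at h2
      exact absurd hjk (not_lt.mpr h2.le)
    · exact absurd (m.injective h1) (ne_of_gt hjk)
  · intro h i hi
    by_contra hle
    push_neg at hle
    rcases lt_or_eq_of_le hle with h1 | h1
    · have hk : (m.symm i).rev < j.rev := Fin.rev_lt_rev.mpr h1
      rw [← hsymm] at hk
      have h2 := h _ hk
      simp only [Equiv.trans_apply, Fin.revPerm_apply, Fin.rev_rev,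
        Equiv.apply_symm_apply, Fin.rev_lt_rev] at h2
      exact absurd hi (not_lt.mpr h2.le)
    · rw [h1, Equiv.apply_symm_apply] at hi
      exact lt_irrefl _ hi
end

section
/- Let n ≥ 1, let m be a perfect matching between n boys and n girls, and let j be a boy with m(j) = i. Then the matched pair (i, j) is satisfied if and only if m maps {1,…,j−1} into {1,…,i−1} and m⁻¹ maps {1,…,i−1} into {1,…,j−1}. Moreover, if the pair (i, j) is satisfied, then i = j, m restricts to a permutation of {1,…,i−1}, and m restricts to a permutation of {i+1,…,n}. -/
/-- A matched pair `(i, j)` with `m j = i` is satisfied iff `m` maps boys below `j`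
to girls below `i` and `m⁻¹` maps girls below `i` to boys below `j`; moreover a
satisfied matched pair has `i = j`, and `m` restricts to a permutation of the
indices below `i` as well as of the indices above `i`. -/
theorem pair_satisfied_iff (n : ℕ) (hn : 1 ≤ n) (m : Equiv.Perm (Fin n))
    (i j : Fin n) (hij : m j = i) :
    ((girlSatisfied m i ∧ boySatisfied m j) ↔
      ((∀ j' : Fin n, j' < j → m j' < i) ∧ (∀ i' : Fin n, i' < i → m.symm i' < j)))
    ∧ ((girlSatisfied m i ∧ boySatisfied m j) →
        i = j ∧ Set.BijOn m {x : Fin n | x < i} {x : Fin n | x < i}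
          ∧ Set.BijOn m {x : Fin n | i < x} {x : Fin n | i < x}) := by

  have hji : m.symm i = j := by rw [← hij]; exact m.symm_apply_apply j
  have key : (girlSatisfied m i ∧ boySatisfied m j) ↔
      ((∀ j' : Fin n, j' < j → m j' < i) ∧ (∀ i' : Fin n, i' < i → m.symm i' < j)) := by
    constructor
    · rintro ⟨hg, hb⟩
      exact ⟨fun j' hj' => hg j' (hji ▸ hj'), fun i' hi' => hb i' (hij ▸ hi')⟩
    · rintro ⟨h1, h2⟩
      exact ⟨fun j' hj' => h1 j' (hji ▸ hj'), fun i' hi' => h2 i' (hij ▸ hi')⟩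
  refine ⟨key, ?_⟩
  intro hsat
  obtain ⟨h1, h2⟩ := key.mp hsat
  -- i = j via cardinality
  have hij' : i = j := by
    have hle : (j : ℕ) ≤ (i : ℕ) := by
      have := Finset.card_le_card_of_injOn (s := Finset.Iio j) (t := Finset.Iio i) m
        (fun x hx => Finset.mem_Iio.2 (h1 x (Finset.mem_Iio.1 hx)))
        (fun a _ b _ hab => m.injective hab)
      simpa using this
    have hge : (i : ℕ) ≤ (j : ℕ) := by
      have := Finset.card_le_card_of_injOn (s := Finset.Iio i) (t := Finset.Iio j) m.symm
        (fun x hx => Finset.mem_Iio.2 (h2 x (Finset.mem_Iio.1 hx)))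
        (fun a _ b _ hab => m.symm.injective hab)
      simpa using this
    exact Fin.ext (le_antisymm hge hle)
  refine ⟨hij', ?_, ?_⟩
  · -- bijection on {x | x < i}
    refine ⟨fun x hx => h1 x (hij' ▸ hx), fun a _ b _ hab => m.injective hab, ?_⟩
    intro y hy
    exact ⟨m.symm y, by simpa using (hij' ▸ h2 y hy : m.symm y < i), m.apply_symm_apply y⟩
  · -- bijection on {x | i < x}
    have hmap : ∀ x : Fin n, i < x → i < m x := by
      intro x hx
      rcases lt_trichotomy (m x) i with h | h | h
      · exfalso
        have := h2 (m x) h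
        rw [m.symm_apply_apply, ← hij'] at this
        exact absurd hx (not_lt.2 this.le)
      · exfalso
        have : x = j := m.injective (by rw [hij, h])
        rw [this, ← hij'] at hx
        exact lt_irrefl i hx
      · exact h
    have hmap' : ∀ y : Fin n, i < y → i < m.symm y := by
      intro y hy
      rcases lt_trichotomy (m.symm y) i with h | h | h
      · exfalso
        have := h1 (m.symm y) (hij' ▸ h)
        rw [m.apply_symm_apply] at this
        exact absurd hy (not_lt.2 this.le)
      · exfalso
        have h3 : y = m i := by rw [← h, m.apply_symm_apply]
        rw [hij', hij] at h3
        rw [h3] at hy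
        exact lt_irrefl i hy
      · exact h
    refine ⟨fun x hx => hmap x hx, fun a _ b _ hab => m.injective hab, ?_⟩
    intro y hy
    exact ⟨m.symm y, hmap' y hy, m.apply_symm_apply y⟩
end

section
/- Let n be even and let A, R ⊆ {1,…,n} with |A| = |R| = n/2. Define the perfect matching m : {1,…,n} → {1,…,n} by: m restricted to R is the unique increasing bijection from R onto A, and m restricted to {1,…,n}∖R is the unique increasing bijection from {1,…,n}∖R onto {1,…,n}∖A. Then for every i ∈ {1,…,n}, the matched pair (i, m⁻¹(i)) is satisfied if and only if |R ∩ {1,…,i−1}| = |A ∩ {1,…,i−1}| and |R ∩ {i+1,…,n}| = |A ∩ {i+1,…,n}|. -/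
/-! The pair of girl `i` is satisfied iff `m` fixes `i` and maps `{x < i}` onto itself: the
girl's and the boy's conditions together say `m x < i ↔ x < m⁻¹ i`, and counting both sides
forces `m⁻¹ i = i`. An increasing bijection `R → A` preserves ranks, so `m` maps `{x < i}` onto
itself iff `R` and `A` (equivalently `Rᶜ` and `Aᶜ`) have equally many elements below `i`. Given
that, `m` fixes `i` iff `i ∈ R ↔ i ∈ A`, which for `|R| = |A|` is the equality of the counts
above `i`. -/

namespace Finset

variable {α β : Type*} [LinearOrder α] [LinearOrder β]

def rank (S : Finset α) (a : α) : ℕ := #(S.filter (· < a))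

theorem rank_mono (S : Finset α) : Monotone S.rank := fun _ _ hab =>
  card_le_card (monotone_filter_right S fun _ _ hx => hx.trans_le hab)

theorem rank_lt_rank_iff {S : Finset α} {a b : α} (ha : a ∈ S) :
    S.rank a < S.rank b ↔ a < b := by
  refine ⟨fun h => lt_of_not_ge fun hba => (S.rank_mono hba).not_gt h, fun hab => ?_⟩
  refine card_lt_card ⟨monotone_filter_right S fun _ _ hx => hx.trans hab, fun hsub => ?_⟩
  exact lt_irrefl a (mem_filter.1 (hsub (mem_filter.2 ⟨ha, hab⟩))).2

theorem rank_injOn (S : Finset α) : Set.InjOn S.rank S := fun a ha b hb h => by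
  by_contra hne
  rcases lt_or_gt_of_ne hne with hab | hba
  · exact ((rank_lt_rank_iff ha).2 hab).ne h
  · exact ((rank_lt_rank_iff hb).2 hba).ne' h

theorem card_eq_rank_add_ite_add (S : Finset α) (a : α) :
    #S = S.rank a + (if a ∈ S then 1 else 0) + #(S.filter (a < ·)) := by
  have hsplit : ∀ x ∈ S, 1 = ((if x < a then 1 else 0) + if a = x then 1 else 0) +
      if a < x then 1 else 0 := fun x _ => by
    rcases lt_trichotomy x a with h | rfl | h
    · simp [h, h.not_gt, h.ne']
    · simp
    · simp [h, h.not_gt, h.ne]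
  rw [card_eq_sum_ones, sum_congr rfl hsplit, sum_add_distrib, sum_add_distrib, sum_ite_eq,
    rank, card_filter, card_filter]

theorem card_filter_gt_eq_iff {R A : Finset α} {a : α} (hcard : #R = #A)
    (hrank : R.rank a = A.rank a) :
    #(R.filter (a < ·)) = #(A.filter (a < ·)) ↔ (a ∈ R ↔ a ∈ A) := by
  have hR := card_eq_rank_add_ite_add R a
  have hA := card_eq_rank_add_ite_add A a
  have hcount : #(R.filter (a < ·)) = #(A.filter (a < ·)) ↔
      (if a ∈ R then 1 else 0) = (if a ∈ A then 1 else 0) := by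
    omega
  rw [hcount]
  split_ifs <;> simp [*]

theorem rank_add_rank_compl [Fintype α] (S : Finset α) (a : α) :
    S.rank a + Sᶜ.rank a = #(univ.filter (· < a)) := by
  rw [rank, rank, ← card_union_of_disjoint (disjoint_filter_filter disjoint_compl_right),
    ← filter_union, union_compl]

theorem rank_image_eq_of_forall_lt_iff {S : Finset α} {f : α → β} (hf : Set.InjOn f S)
    {a : α} {b : β} (h : ∀ x ∈ S, f x < b ↔ x < a) : (S.image f).rank b = S.rank a := by
  rw [rank, filter_image, filter_congr h, card_image_of_injOn (hf.mono (filter_subset _ _)), rank]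

theorem rank_image_of_strictMonoOn {S : Finset α} {f : α → β} (hf : StrictMonoOn f S) {x : α}
    (hx : x ∈ S) : (S.image f).rank (f x) = S.rank x :=
  rank_image_eq_of_forall_lt_iff hf.injOn fun _ hy => hf.lt_iff_lt hy hx

theorem rank_compl_eq_of_rank_eq [Fintype α] {R A : Finset α} {a : α}
    (h : R.rank a = A.rank a) : Rᶜ.rank a = Aᶜ.rank a := by
  have hR := rank_add_rank_compl R a
  have hA := rank_add_rank_compl A a
  omega

theorem lt_iff_lt_of_rank_image_eq {S : Finset α} {f : α → α} {x a : α}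
    (hf : StrictMonoOn f S)
    (hx : x ∈ S) (h : (S.image f).rank a = S.rank a) : f x < a ↔ x < a := by
  rw [← rank_lt_rank_iff (mem_image_of_mem f hx), rank_image_of_strictMonoOn hf hx, h,
    rank_lt_rank_iff hx]

theorem apply_eq_self_of_rank_image_eq {S : Finset α} {f : α → α} {a : α}
    (hf : StrictMonoOn f S)
    (ha : a ∈ S) (ha' : a ∈ S.image f) (h : (S.image f).rank a = S.rank a) : f a = a :=
  (S.image f).rank_injOn (mem_image_of_mem f ha) ha' (by rw [rank_image_of_strictMonoOn hf ha, h])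

end Finset

section PiecewiseStrictMono

open Finset

variable {α : Type*} [LinearOrder α] [Fintype α] {f : α → α} {R A : Finset α} {a : α}

theorem apply_lt_iff_lt_of_rank_eq (hmono : StrictMonoOn f R) (himg : R.image f = A)
    (hmono' : StrictMonoOn f ↑Rᶜ) (himg' : Rᶜ.image f = Aᶜ) (h : R.rank a = A.rank a)
    (x : α) : f x < a ↔ x < a := by
  by_cases hx : x ∈ R
  · exact lt_iff_lt_of_rank_image_eq hmono hx (by rw [himg, h])
  · exact lt_iff_lt_of_rank_image_eq hmono' (mem_compl.2 hx)
      (by rw [himg', rank_compl_eq_of_rank_eq h])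

theorem apply_eq_self_of_rank_eq (hmono : StrictMonoOn f R) (himg : R.image f = A)
    (hmono' : StrictMonoOn f ↑Rᶜ) (himg' : Rᶜ.image f = Aᶜ) (h : R.rank a = A.rank a)
    (hmem : a ∈ R ↔ a ∈ A) : f a = a := by
  by_cases ha : a ∈ R
  · exact apply_eq_self_of_rank_image_eq hmono ha (himg ▸ hmem.1 ha) (by rw [himg, h])
  · exact apply_eq_self_of_rank_image_eq hmono' (mem_compl.2 ha)
      (himg' ▸ mem_compl.2 (mt hmem.2 ha)) (by rw [himg', rank_compl_eq_of_rank_eq h])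

end PiecewiseStrictMono

theorem Equiv.Perm.eq_of_forall_apply_lt_iff {α : Type*} [LinearOrder α] [Fintype α]
    {σ : Equiv.Perm α} {a b : α} (h : ∀ x, σ x < a ↔ x < b) : b = a := by
  have hrank := Finset.rank_image_eq_of_forall_lt_iff (S := Finset.univ) σ.injective.injOn
    fun x _ => h x
  rw [Finset.image_univ_equiv] at hrank
  exact Finset.univ.rank_injOn (Finset.mem_univ b) (Finset.mem_univ a) hrank.symm

theorem girlSatisfied_and_boySatisfied_iff {n : ℕ} (m : Equiv.Perm (Fin n)) (i : Fin n) :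
    girlSatisfied m i ∧ boySatisfied m (m.symm i) ↔ m i = i ∧ ∀ x, m x < i ↔ x < i := by
  have hpair :
      girlSatisfied m i ∧ boySatisfied m (m.symm i) ↔ ∀ x, m x < i ↔ x < m.symm i := by
    rw [boySatisfied, m.apply_symm_apply, ← m.forall_congr_right]
    simp only [girlSatisfied, m.symm_apply_apply, ← forall_and]
    exact forall_congr' fun _ => iff_def'.symm
  rw [hpair]
  constructor
  · intro h
    have hfix := Equiv.Perm.eq_of_forall_apply_lt_iff h
    rw [hfix] at h
    exact ⟨m.symm_apply_eq.1 hfix |>.symm, h⟩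
  · rintro ⟨hfix, h⟩
    rwa [m.symm_apply_eq.2 hfix.symm]

open Finset in
theorem pair_satisfied_iff_counts_general (n : ℕ)
    (A R : Finset (Fin n)) (hA : A.card = n / 2) (hR : R.card = n / 2)
    (m : Equiv.Perm (Fin n))
    (hmono : StrictMonoOn m ↑R) (himg : R.image m = A)
    (hmono' : StrictMonoOn m ↑Rᶜ) (himg' : Rᶜ.image m = Aᶜ) :
    ∀ i : Fin n,
      (girlSatisfied m i ∧ boySatisfied m (m.symm i)) ↔
        ((R.filter (fun x => x < i)).card = (A.filter (fun x => x < i)).card ∧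
         (R.filter (fun x => i < x)).card = (A.filter (fun x => i < x)).card) := by
  intro i
  rw [girlSatisfied_and_boySatisfied_iff]
  change _ ↔ R.rank i = A.rank i ∧ _
  have hcard : #R = #A := hR.trans hA.symm
  constructor
  · rintro ⟨hfix, hlt⟩
    have hrank : R.rank i = A.rank i := by
      rw [← himg, rank_image_eq_of_forall_lt_iff m.injective.injOn fun x _ => hlt x]
    refine ⟨hrank, (card_filter_gt_eq_iff hcard hrank).2 ?_⟩
    have hmem := m.injective.mem_finset_image (s := R) (a := i)
    rwa [hfix, himg, Iff.comm] at hmem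
  · rintro ⟨hrank, hgt⟩
    have hmem := (card_filter_gt_eq_iff hcard hrank).1 hgt
    exact ⟨apply_eq_self_of_rank_eq hmono himg hmono' himg' hrank hmem,
      apply_lt_iff_lt_of_rank_eq hmono himg hmono' himg' hrank⟩

/-- Let `n` be even, `A, R` sets of size `n/2`, and let `m` be the matching that is
the unique increasing bijection from `R` onto `A` and from `Rᶜ` onto `Aᶜ`.
Then the matched pair of girl `i` is satisfied iff
`|R ∩ {x < i}| = |A ∩ {x < i}|` and `|R ∩ {x > i}| = |A ∩ {x > i}|`. -/
theorem pair_satisfied_iff_counts (n : ℕ) (hn : Even n)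
    (A R : Finset (Fin n)) (hA : A.card = n / 2) (hR : R.card = n / 2)
    (m : Equiv.Perm (Fin n))
    (hmono : StrictMonoOn m ↑R) (himg : R.image m = A)
    (hmono' : StrictMonoOn m ↑Rᶜ) (himg' : Rᶜ.image m = Aᶜ) :
    ∀ i : Fin n,
      (girlSatisfied m i ∧ boySatisfied m (m.symm i)) ↔
        ((R.filter (fun x => x < i)).card = (A.filter (fun x => x < i)).card ∧
         (R.filter (fun x => i < x)).card = (A.filter (fun x => i < x)).card) :=
  pair_satisfied_iff_counts_general n A R hA hR m hmono himg hmono' himg'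
end

section
/- There exists a constant C > 0 such that for every even integer n ≥ 2 and every subset A ⊆ {1,…,n} with |A| = n/2, the sum over i = 1,…,n of C(i−1, |A ∩ {1,…,i−1}|) · C(n−i, |A ∩ {i+1,…,n}|) is at most C · √n · C(n, n/2). (Equivalently: for a uniformly random (n/2)-element subset R of {1,…,n}, the expected number of indices i with |R ∩ {1,…,i−1}| = |A ∩ {1,…,i−1}| and |R ∩ {i+1,…,n}| = |A ∩ {i+1,…,n}| is O(√n); this is the quantitative core of the theorem that the number of satisfied matched pairs cannot be approximated within ratio better than O(1/√n).) -/
/-!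
Since `(m + 1) · C(m, a)² ≤ 4^m`, the `i`-th term is at most `2^(n-1) / √(p q)` with
`p = i + 1`, `q = n - i`. The inequality `1 / √(p q) ≤ (1/√p + 1/√q) / √(p + q)` turns the sum
into `2^n / √(n + 1) · ∑_{j ≤ n} 1/√j ≤ 2 · 2^n`, and `2^n ≤ √(2n) · C(n, n/2)`.
Both binomial estimates follow by induction from `(k + 1) C(2k+2, k+1) = 2 (2k + 1) C(2k, k)`.
-/

namespace Nat

theorem two_mul_add_one_mul_centralBinom_sq_le (k : ℕ) :
    (2 * k + 1) * centralBinom k ^ 2 ≤ 16 ^ k := by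
  induction k with
  | zero => simp
  | succ k ih =>
    have step := succ_mul_centralBinom_succ k
    refine Nat.le_of_mul_le_mul_left ?_ (show 0 < (k + 1) ^ 2 by positivity)
    calc (k + 1) ^ 2 * ((2 * (k + 1) + 1) * centralBinom (k + 1) ^ 2)
        = (2 * k + 3) * ((k + 1) * centralBinom (k + 1)) ^ 2 := by ring
      _ = 4 * ((2 * k + 3) * (2 * k + 1)) * ((2 * k + 1) * centralBinom k ^ 2) := by
          rw [step]; ring
      _ ≤ 4 * (4 * (k + 1) ^ 2) * 16 ^ k := Nat.mul_le_mul (by nlinarith) ih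
      _ = (k + 1) ^ 2 * 16 ^ (k + 1) := by ring

theorem sixteen_pow_le_four_mul_mul_centralBinom_sq {k : ℕ} (hk : 0 < k) :
    16 ^ k ≤ 4 * k * centralBinom k ^ 2 := by
  induction k, hk using Nat.le_induction with
  | base => decide
  | succ k hk ih =>
    have step := succ_mul_centralBinom_succ k
    refine Nat.le_of_mul_le_mul_left ?_ (show 0 < (k + 1) ^ 2 by positivity)
    calc (k + 1) ^ 2 * 16 ^ (k + 1)
        = 16 * (k + 1) ^ 2 * 16 ^ k := by ring
      _ ≤ 16 * (k + 1) ^ 2 * (4 * k * centralBinom k ^ 2) := by gcongr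
      _ = 4 * (k + 1) * (4 * (4 * k * (k + 1))) * centralBinom k ^ 2 := by ring
      _ ≤ 4 * (k + 1) * (4 * (2 * k + 1) ^ 2) * centralBinom k ^ 2 := by gcongr; nlinarith
      _ = (k + 1) ^ 2 * (4 * (k + 1) * centralBinom (k + 1) ^ 2) := by
          rw [show (k + 1) ^ 2 * (4 * (k + 1) * centralBinom (k + 1) ^ 2)
            = 4 * (k + 1) * ((k + 1) * centralBinom (k + 1)) ^ 2 by ring, step]; ring

theorem succ_mul_choose_sq_le_four_pow (m a : ℕ) : (m + 1) * m.choose a ^ 2 ≤ 4 ^ m := by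
  refine (Nat.mul_le_mul_left _ (Nat.pow_le_pow_left (choose_le_middle a m) 2)).trans ?_
  obtain ⟨k, rfl | rfl⟩ := even_or_odd' m
  · rw [show 2 * k / 2 = k by omega, ← centralBinom_eq_two_mul_choose, pow_mul]
    exact two_mul_add_one_mul_centralBinom_sq_le k
  · have hcentral : centralBinom (k + 1) = 2 * (2 * k + 1).choose k := by
      rw [centralBinom_eq_two_mul_choose, show 2 * (k + 1) = 2 * k + 1 + 1 by ring,
        choose_succ_succ, choose_symm_half]; ring
    have hbound := two_mul_add_one_mul_centralBinom_sq_le (k + 1)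
    rw [hcentral, show 16 ^ (k + 1) = 4 * 4 ^ (2 * k + 1) by rw [pow_succ 4, pow_mul]; ring] at hbound
    rw [show (2 * k + 1) / 2 = k by omega]
    nlinarith

theorem choose_le_two_pow_div_sqrt (m a : ℕ) : (m.choose a : ℝ) ≤ 2 ^ m / √(m + 1) := by
  rw [le_div_iff₀ (by positivity), ← pow_le_pow_iff_left₀ (by positivity) (by positivity)
    two_ne_zero, mul_pow, Real.sq_sqrt (by positivity), ← pow_mul, pow_mul']
  have hbound := succ_mul_choose_sq_le_four_pow m a
  rw [mul_comm] at hbound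
  exact_mod_cast hbound

theorem two_pow_le_sqrt_two_mul_mul_choose_half {n : ℕ} (hn : Even n) (hn0 : n ≠ 0) :
    (2 : ℝ) ^ n ≤ √(2 * n) * n.choose (n / 2) := by
  obtain ⟨k, rfl⟩ := hn
  have hchoose : (k + k).choose ((k + k) / 2) = centralBinom k := by
    rw [centralBinom_eq_two_mul_choose]; congr 1 <;> omega
  have hpow : ((2 : ℝ) ^ (k + k)) ^ 2 = 16 ^ k := by
    rw [← pow_mul, show (k + k) * 2 = 4 * k by ring, pow_mul]; norm_num
  have key : (16 : ℝ) ^ k ≤ 4 * k * centralBinom k ^ 2 := by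
    exact_mod_cast sixteen_pow_le_four_mul_mul_centralBinom_sq (k := k) (by omega)
  rw [← pow_le_pow_iff_left₀ (by positivity) (by positivity) two_ne_zero, mul_pow,
    Real.sq_sqrt (by positivity), hchoose, hpow]
  push_cast
  linarith

end Nat

theorem inv_mul_le_inv_add_inv_div_sqrt {x y : ℝ} (hx : 0 < x) (hy : 0 < y) :
    (x * y)⁻¹ ≤ (x⁻¹ + y⁻¹) / √(x ^ 2 + y ^ 2) := by
  have hsqrt : √(x ^ 2 + y ^ 2) ≤ x + y := by
    rw [Real.sqrt_le_left (by positivity)]; nlinarith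
  calc (x * y)⁻¹ = (x⁻¹ + y⁻¹) / (x + y) := by field_simp; ring
    _ ≤ (x⁻¹ + y⁻¹) / √(x ^ 2 + y ^ 2) := by gcongr

theorem choose_mul_choose_le {i j n : ℕ} (h : i + j + 1 = n) (a b : ℕ) :
    (i.choose a * j.choose b : ℝ) ≤ 2 ^ n * ((√(i + 1))⁻¹ + (√(j + 1))⁻¹) / (2 * √(n + 1)) := by
  have hx : 0 < √((i : ℝ) + 1) := by positivity
  have hy : 0 < √((j : ℝ) + 1) := by positivity
  have hn : ((n : ℝ) + 1) = √((i : ℝ) + 1) ^ 2 + √((j : ℝ) + 1) ^ 2 := by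
    rw [Real.sq_sqrt (by positivity), Real.sq_sqrt (by positivity), ← h]; push_cast; ring
  calc (i.choose a * j.choose b : ℝ)
      ≤ (2 ^ i / √(i + 1)) * (2 ^ j / √(j + 1)) := by
        gcongr <;> exact Nat.choose_le_two_pow_div_sqrt _ _
    _ = 2 ^ n / 2 * (√(i + 1) * √(j + 1))⁻¹ := by
        rw [← h]; field_simp; ring
    _ ≤ 2 ^ n / 2 * (((√(i + 1))⁻¹ + (√(j + 1))⁻¹) / √(n + 1)) := by
        rw [hn]; gcongr; exact inv_mul_le_inv_add_inv_div_sqrt hx hy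
    _ = 2 ^ n * ((√(i + 1))⁻¹ + (√(j + 1))⁻¹) / (2 * √(n + 1)) := by ring

theorem sum_range_inv_sqrt_succ_le (n : ℕ) : ∑ j ∈ Finset.range n, (√(j + 1))⁻¹ ≤ 2 * √n := by
  induction n with
  | zero => simp
  | succ n ih =>
    have hpos : 0 < √((n : ℝ) + 1) := by positivity
    have hmono : √(n : ℝ) ≤ √((n : ℝ) + 1) := Real.sqrt_le_sqrt (by linarith)
    have hsq : √((n : ℝ) + 1) ^ 2 - √(n : ℝ) ^ 2 = 1 := by
      rw [Real.sq_sqrt (by positivity), Real.sq_sqrt (by positivity)]; ring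
    have hstep : (√((n : ℝ) + 1))⁻¹ ≤ 2 * (√((n : ℝ) + 1) - √n) := by
      rw [inv_le_iff_one_le_mul₀' hpos]; nlinarith
    rw [Finset.sum_range_succ]; push_cast
    linarith

theorem sum_choose_mul_choose_le (n : ℕ) (a b : Fin n → ℕ) :
    ∑ i : Fin n, ((i : ℕ).choose (a i) * (n - 1 - i).choose (b i) : ℝ) ≤ 2 * 2 ^ n := by
  set g : ℕ → ℝ := fun j ↦
    2 ^ n * ((√(j + 1))⁻¹ + (√((n - 1 - j : ℕ) + 1))⁻¹) / (2 * √(n + 1))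
  have hreflect : ∑ j ∈ Finset.range n, (√((n - 1 - j : ℕ) + 1))⁻¹
      = ∑ j ∈ Finset.range n, (√((j : ℝ) + 1))⁻¹ :=
    Finset.sum_range_reflect (fun j ↦ (√((j : ℝ) + 1))⁻¹) n
  have hsum : ∑ j ∈ Finset.range n, g j
      = 2 ^ n / √(n + 1) * ∑ j ∈ Finset.range n, (√((j : ℝ) + 1))⁻¹ := by
    simp only [g, ← Finset.sum_div, ← Finset.mul_sum, Finset.sum_add_distrib, hreflect]
    field_simp; ring
  calc ∑ i : Fin n, ((i : ℕ).choose (a i) * (n - 1 - i).choose (b i) : ℝ)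
      ≤ ∑ i : Fin n, g i :=
        Finset.sum_le_sum fun i _ ↦ choose_mul_choose_le (by omega) _ _
    _ = 2 ^ n / √(n + 1) * ∑ j ∈ Finset.range n, (√((j : ℝ) + 1))⁻¹ := by
        rw [Fin.sum_univ_eq_sum_range g, hsum]
    _ ≤ 2 ^ n / √(n + 1) * (2 * √(n + 1)) := by
        gcongr
        exact (sum_range_inv_sqrt_succ_le n).trans (by gcongr; linarith)
    _ = 2 * 2 ^ n := by field_simp

/-- There is a constant `C > 0` such that for every even `n ≥ 2` and every
`A ⊆ Fin n` with `|A| = n/2`,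
`∑ i, C(|{x < i}|, |A ∩ {x < i}|) · C(|{x > i}|, |A ∩ {x > i}|) ≤ C √n · C(n, n/2)`. -/
theorem expected_satisfied_pairs_le_sqrt :
    ∃ C : ℝ, 0 < C ∧ ∀ n : ℕ, Even n → 2 ≤ n → ∀ A : Finset (Fin n), A.card = n / 2 →
      (∑ i : Fin n,
        ((Nat.choose (i : ℕ) ((A.filter (fun x => x < i)).card) *
          Nat.choose (n - 1 - (i : ℕ)) ((A.filter (fun x => i < x)).card) : ℕ) : ℝ))
        ≤ C * Real.sqrt n * ((Nat.choose n (n / 2) : ℕ) : ℝ) := by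
  refine ⟨2 * √2, by positivity, fun n hn hn2 _ _ ↦ ?_⟩
  push_cast
  calc _ ≤ 2 * 2 ^ n := sum_choose_mul_choose_le n _ _
    _ ≤ 2 * (√(2 * n) * n.choose (n / 2)) := by
        gcongr; exact Nat.two_pow_le_sqrt_two_mul_mul_choose_half hn (by omega)
    _ = 2 * √2 * √n * n.choose (n / 2) := by rw [Real.sqrt_mul zero_le_two]; ring
end

section
/- There exist a constant c > 0 and an integer k₀ such that for every integer k ≥ k₀ and every integer ℓ with c ≤ ℓ ≤ k/c, the following holds: if π is a uniformly random permutation of {1,…,k}, q = ⌈k/ℓ⌉, and R = min{π(1),…,π(q)}, then Pr(ℓ/5 < R ≤ ℓ) > 1/13. -/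
/-!
`R > t` exactly when `π` maps the first `q` positions into `{t+1, …, k}`, so
`Pr(R > t) = (k-t)_q / (k)_q = ∏_{i<q} (1 - t/(k-i))`, whence
`(1 - t/(k-q))^q ≤ Pr(R > t) ≤ (1 - t/k)^q`.
Take `c = 100`. Since `qℓ ≥ k`, `Pr(R > ℓ) ≤ exp(-qℓ/k) ≤ 1/e < 0.368`, while by Bernoulli's
inequality `Pr(R > ⌊ℓ/5⌋) ≥ 1 - q⌊ℓ/5⌋/(k-q) ≥ 0.79`; the difference exceeds `0.42 > 1/13`.
-/

open scoped Classical

/-- For a permutation `π` of `{1,…,k}` (modelled as `Equiv.Perm (Fin k)` with values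
`(π j).val + 1 ∈ {1,…,k}`), `minOfFirst k q π` is `R = min {π(1),…,π(q)}`. -/
noncomputable def minOfFirst (k q : ℕ) (π : Equiv.Perm (Fin k)) : ℕ :=
  sInf {v : ℕ | ∃ j : Fin k, (j : ℕ) < q ∧ v = (π j : ℕ) + 1}

open Finset Equiv Function
open scoped Nat

section Counting

variable {α : Type*} [Fintype α]

theorem card_perm_restrict_eq (s : Finset α) (f : s ↪ α) :
    Fintype.card {π : Perm α // ∀ x : s, π x = f x} = (Fintype.card α - #s)! := by
  have hs : Fintype.card ((s : Set α)ᶜ : Set α) = Fintype.card α - #s := by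
    rw [Fintype.card_compl_set]
    exact congrArg _ (Fintype.card_coe s)
  have hf : Fintype.card ((Set.range f)ᶜ : Set α) = Fintype.card α - #s := by
    rw [Fintype.card_compl_set, Set.card_range_of_injective f.injective, Fintype.card_coe]
  have e : {π : Perm α // ∀ x : s, π x = f x} ≃
      (((s : Set α)ᶜ : Set α) ≃ ((Set.range f)ᶜ : Set α)) :=
    Equiv.Set.compl (s := (s : Set α)) f.toEquivRange
  rw [Fintype.card_congr e, Fintype.card_equiv (Fintype.equivOfCardEq (hs.trans hf.symm)), hs]

theorem card_perm_mapsTo (s t : Finset α) :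
    #{π : Perm α | ∀ a ∈ s, π a ∈ t} = (#t).descFactorial #s * (Fintype.card α - #s)! := by
  set ρ : Perm α → (s ↪ α) := fun π => (Embedding.subtype _).trans π.toEmbedding
  set T : Finset (s ↪ α) := {f | ∀ a, f a ∈ t}
  have hfiber (f : s ↪ α) : #{π | ρ π = f} = (Fintype.card α - #s)! := by
    rw [← card_perm_restrict_eq s f, Fintype.card_subtype]
    congr 1
    ext π
    simp [ρ, Embedding.ext_iff]
  have hT : #T = (#t).descFactorial #s := by
    rw [← Fintype.card_coe s, ← Fintype.card_coe t, ← Fintype.card_embedding_eq,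
      ← Fintype.card_subtype]
    exact Fintype.card_congr
      { toFun := fun f => ⟨fun a => ⟨f.1 a, f.2 a⟩,
          fun a b h => f.1.injective (congrArg Subtype.val h)⟩
        invFun := fun g => ⟨g.trans (Embedding.subtype _), fun a => (g a).2⟩
        left_inv := fun _ => rfl
        right_inv := fun _ => rfl }
  have hpre : univ.filter (fun π : Perm α => ∀ a ∈ s, π a ∈ t) =
      univ.filter (fun π => ρ π ∈ T) := by
    ext π
    simp [ρ, T]
  rw [hpre, ← sum_card_fiberwise_eq_card_filter, sum_congr rfl fun f _ => hfiber f, sum_const,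
    hT, smul_eq_mul]

end Counting

theorem Fin.card_filter_le_val (k t : ℕ) : #{x : Fin k | t ≤ (x : ℕ)} = k - t := by
  have := card_filter_add_card_filter_not (s := univ) (fun x : Fin k => (x : ℕ) < t)
  simp only [not_lt, Fin.card_filter_val_lt, card_univ, Fintype.card_fin] at this
  omega

section MinOfFirst

variable {k q : ℕ}

theorem lt_minOfFirst_iff (hq : 0 < q) (hqk : q ≤ k) (π : Perm (Fin k)) (t : ℕ) :
    t < minOfFirst k q π ↔ ∀ j : Fin k, (j : ℕ) < q → t ≤ π j := by
  have hne : {v : ℕ | ∃ j : Fin k, (j : ℕ) < q ∧ v = (π j : ℕ) + 1}.Nonempty :=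
    ⟨_, ⟨0, by omega⟩, hq, rfl⟩
  constructor
  · intro h j hj
    have := Nat.sInf_le (s := {v : ℕ | ∃ j : Fin k, (j : ℕ) < q ∧ v = (π j : ℕ) + 1})
      ⟨j, hj, rfl⟩
    exact Nat.lt_succ_iff.mp (h.trans_le this)
  · intro h
    obtain ⟨j, hj, hv⟩ := Nat.sInf_mem hne
    rw [minOfFirst, hv]
    exact Nat.lt_succ_of_le (h j hj)

theorem card_lt_minOfFirst (hq : 0 < q) (hqk : q ≤ k) (t : ℕ) :
    #{π : Perm (Fin k) | t < minOfFirst k q π} = (k - t).descFactorial q * (k - q)! := by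
  have hcard := card_perm_mapsTo (α := Fin k) {j | (j : ℕ) < q} {x | t ≤ (x : ℕ)}
  rw [Fin.card_filter_val_lt, Fin.card_filter_le_val, Fintype.card_fin, min_eq_right hqk]
    at hcard
  rw [← hcard]
  congr 1
  ext π
  simp [lt_minOfFirst_iff hq hqk]

theorem prob_lt_minOfFirst (hq : 0 < q) (hqk : q ≤ k) (t : ℕ) :
    (#{π : Perm (Fin k) | t < minOfFirst k q π} : ℝ) / k ! =
      (k - t).descFactorial q / k.descFactorial q := by
  rw [card_lt_minOfFirst hq hqk, ← Nat.factorial_mul_descFactorial hqk, Nat.cast_mul,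
    Nat.cast_mul, mul_comm, mul_div_mul_left _ _ (by positivity)]

theorem prob_minOfFirst_mem_Ioc (hq : 0 < q) (hqk : q ≤ k) {a b : ℕ} (hab : a ≤ b) :
    (#{π : Perm (Fin k) | a < minOfFirst k q π ∧ minOfFirst k q π ≤ b} : ℝ) / k ! =
      (k - a).descFactorial q / k.descFactorial q -
        (k - b).descFactorial q / k.descFactorial q := by
  have hsplit : #{π : Perm (Fin k) | a < minOfFirst k q π ∧ minOfFirst k q π ≤ b} +
      #{π : Perm (Fin k) | b < minOfFirst k q π} =
        #{π : Perm (Fin k) | a < minOfFirst k q π} := by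
    rw [← card_union_of_disjoint (disjoint_filter.2 fun _ _ h => by omega), ← filter_or]
    congr 1
    ext π
    simp only [mem_filter, mem_univ, true_and]
    omega
  rw [← prob_lt_minOfFirst hq hqk, ← prob_lt_minOfFirst hq hqk, ← hsplit, Nat.cast_add]
  ring

end MinOfFirst

section DescFactorialRatio

variable {k q t : ℕ}

theorem Nat.descFactorial_sub_div_descFactorial (h : t + q ≤ k) :
    ((k - t).descFactorial q : ℝ) / k.descFactorial q =
      ∏ i ∈ range q, (1 - t / ((k : ℝ) - i)) := by
  rw [Nat.descFactorial_eq_prod_range, Nat.descFactorial_eq_prod_range, Nat.cast_prod,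
    Nat.cast_prod, ← prod_div_distrib]
  refine prod_congr rfl fun i hi => ?_
  have hi : i < q := mem_range.mp hi
  have hki : (0 : ℝ) < k - i := by
    rw [sub_pos]
    exact_mod_cast (by omega : i < k)
  rw [Nat.cast_sub (by omega), Nat.cast_sub (by omega), Nat.cast_sub (by omega)]
  field_simp
  ring

theorem Nat.descFactorial_sub_div_descFactorial_le (h : t + q ≤ k) :
    ((k - t).descFactorial q : ℝ) / k.descFactorial q ≤ (1 - t / k) ^ q := by
  rw [Nat.descFactorial_sub_div_descFactorial h, pow_eq_prod_const]
  apply prod_le_prod <;> intro i hi <;>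
    have hti : (t : ℝ) + i < k := by
      exact_mod_cast (by have := mem_range.mp hi; omega : t + i < k)
  · rw [sub_nonneg, div_le_one (by linarith)]
    linarith
  · gcongr 1 - _ / ?_
    · linarith
    · exact sub_le_self _ i.cast_nonneg

theorem Nat.one_sub_div_pow_le_descFactorial_sub_div_descFactorial (h : t + q < k) :
    (1 - t / ((k : ℝ) - q)) ^ q ≤ ((k - t).descFactorial q : ℝ) / k.descFactorial q := by
  rw [Nat.descFactorial_sub_div_descFactorial h.le, pow_eq_prod_const]
  have htq : (t : ℝ) + q < k := by exact_mod_cast h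
  apply prod_le_prod <;> intro i hi
  · rw [sub_nonneg, div_le_one (by linarith)]
    linarith
  · have hi : (i : ℝ) < q := by exact_mod_cast mem_range.mp hi
    gcongr 1 - _ / ?_
    · linarith
    · linarith

end DescFactorialRatio

theorem Real.one_sub_pow_le_exp_neg_mul {x : ℝ} (hx : x ≤ 1) (n : ℕ) :
    (1 - x) ^ n ≤ Real.exp (-(n * x)) := by
  rw [neg_mul_eq_mul_neg, Real.exp_nat_mul]
  gcongr
  linarith [Real.add_one_le_exp (-x)]

theorem one_div_thirteen_lt_descFactorial_div_sub {k ℓ : ℕ} (hℓ : 100 ≤ ℓ) (hk : 100 * ℓ ≤ k) :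
    let q := ⌈(k : ℝ) / ℓ⌉₊
    (1 : ℝ) / 13 < ((k - ℓ / 5).descFactorial q : ℝ) / k.descFactorial q -
      ((k - ℓ).descFactorial q : ℝ) / k.descFactorial q := by
  intro q
  have hℓR : (100 : ℝ) ≤ ℓ := by exact_mod_cast hℓ
  have hkR : 100 * (ℓ : ℝ) ≤ k := by exact_mod_cast hk
  have hk_pos : (0 : ℝ) < k := by linarith
  have hq_ge : (k : ℝ) ≤ q * ℓ := (div_le_iff₀ (by positivity)).mp (Nat.le_ceil _)
  have hq_le : (q : ℝ) * ℓ ≤ k + ℓ := by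
    have := Nat.ceil_lt_add_one (by positivity : (0 : ℝ) ≤ k / ℓ)
    rw [← le_div_iff₀ (by positivity), add_div, div_self (by positivity)]
    exact this.le
  have hq_small : 100 * (q : ℝ) ≤ k + 100 := by nlinarith
  have ht₀ : ((ℓ / 5 : ℕ) : ℝ) ≤ ℓ / 5 := Nat.cast_div_le
  have hℓq : ℓ + q ≤ k := by exact_mod_cast (show (ℓ : ℝ) + q ≤ k by nlinarith)
  have ht₀q : ℓ / 5 + q < k := by omega
  have hkq : 0 < (k : ℝ) - q := by nlinarith
  have hupper : ((k - ℓ).descFactorial q : ℝ) / k.descFactorial q ≤ Real.exp (-1) := calc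
    _ ≤ (1 - (ℓ : ℝ) / k) ^ q := Nat.descFactorial_sub_div_descFactorial_le hℓq
    _ ≤ Real.exp (-(q * ((ℓ : ℝ) / k))) :=
      Real.one_sub_pow_le_exp_neg_mul ((div_le_one hk_pos).mpr (by linarith)) q
    _ ≤ Real.exp (-1) := by
      rw [Real.exp_le_exp, neg_le_neg_iff, ← mul_div_assoc, one_le_div hk_pos]
      exact hq_ge
  have hlower : 1 - q * (ℓ / 5 : ℕ) / ((k : ℝ) - q) ≤
      ((k - ℓ / 5).descFactorial q : ℝ) / k.descFactorial q := calc
    _ = 1 + q * (-((ℓ / 5 : ℕ) / ((k : ℝ) - q))) := by ring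
    _ ≤ (1 + -((ℓ / 5 : ℕ) / ((k : ℝ) - q))) ^ q := by
      refine one_add_mul_le_pow ?_ q
      have : ((ℓ / 5 : ℕ) : ℝ) / ((k : ℝ) - q) ≤ 1 := (div_le_one hkq).mpr (by nlinarith)
      linarith
    _ ≤ _ := by
      rw [← sub_eq_add_neg]
      exact Nat.one_sub_div_pow_le_descFactorial_sub_div_descFactorial ht₀q
  have hsmall : q * (ℓ / 5 : ℕ) / ((k : ℝ) - q) ≤ 0.21 := by
    rw [div_le_iff₀ hkq]
    nlinarith
  linarith [Real.exp_neg_one_lt_d9]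

/-- There are `c > 0` and `k₀` such that for all `k ≥ k₀` and integers `c ≤ ℓ ≤ k/c`:
for a uniformly random permutation `π` of `{1,…,k}`, with `q = ⌈k/ℓ⌉` and
`R = min{π(1),…,π(q)}`, we have `Pr(ℓ/5 < R ≤ ℓ) > 1/13`. -/
theorem good_event_prob :
    ∃ c : ℝ, 0 < c ∧ ∃ k₀ : ℕ, ∀ k : ℕ, k₀ ≤ k → ∀ ℓ : ℕ,
      c ≤ (ℓ : ℝ) → (ℓ : ℝ) ≤ (k : ℝ) / c →
      (1 : ℝ) / 13 <
        (((Finset.univ : Finset (Equiv.Perm (Fin k))).filter (fun π =>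
            (ℓ : ℝ) / 5 < (minOfFirst k ⌈(k : ℝ) / (ℓ : ℝ)⌉₊ π : ℝ) ∧
            minOfFirst k ⌈(k : ℝ) / (ℓ : ℝ)⌉₊ π ≤ ℓ)).card : ℝ) /
          (Nat.factorial k : ℝ) := by
  refine ⟨100, by norm_num, 0, fun k _ ℓ hℓ hℓk => ?_⟩
  have hℓ' : 100 ≤ ℓ := by exact_mod_cast hℓ
  have hk : 100 * ℓ ≤ k := by
    rw [le_div_iff₀ (by norm_num)] at hℓk
    exact_mod_cast (by push_cast; linarith : ((100 * ℓ : ℕ) : ℝ) ≤ k)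
  have hq : 0 < ⌈(k : ℝ) / ℓ⌉₊ := Nat.ceil_pos.mpr (div_pos (by linarith) (by linarith))
  have hqk : ⌈(k : ℝ) / ℓ⌉₊ ≤ k := Nat.ceil_le.mpr (div_le_self k.cast_nonneg (by linarith))
  have hevent (n : ℕ) : (ℓ : ℝ) / 5 < n ↔ ℓ / 5 < n := by
    rw [div_lt_iff₀ (by norm_num), Nat.div_lt_iff_lt_mul (by norm_num)]
    norm_cast
  simp_rw [hevent]
  rw [prob_minOfFirst_mem_Ioc hq hqk (Nat.div_le_self ℓ 5)]
  exact one_div_thirteen_lt_descFactorial_div_sub hℓ' hk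
end

section
/- Let (Z_i)_{i≥1} be an i.i.d. sequence of integrable real-valued random variables with E[Z_1] > 0 and P(Z_1 ≥ 1) > 0. Then P(Σ_{i=1}^{k} Z_i > 0 for every k ≥ 1) > 0, i.e., with positive probability all partial sums of the sequence are strictly positive. -/
open MeasureTheory ProbabilityTheory Filter Finset

/-!
By the strong law of large numbers the partial sums tend to `+∞` almost surely, so they are
a.s. bounded below, and some bound `-m` holds with positive probability. The walk restarted at
time `m` has the same law, and it is independent of the event that the first `m` steps are all
`≥ 1`, which has probability `P(Z₀ ≥ 1)^m > 0`. On the intersection the walk climbs to at least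
`m` in its first `m` steps and afterwards never falls by `m` or more.
-/

def partialSumsAbove (c : ℝ) : Set (ℕ → ℝ) :=
  {x | ∀ k, 1 ≤ k → c < ∑ i ∈ range k, x i}

theorem measurableSet_partialSumsAbove (c : ℝ) : MeasurableSet (partialSumsAbove c) := by
  simp only [partialSumsAbove, Set.ofPred_forall]
  exact MeasurableSet.iInter fun _ => MeasurableSet.iInter fun _ =>
    measurableSet_lt measurable_const (Finset.measurable_sum _ fun i _ => measurable_pi_apply i)

theorem exists_mem_partialSumsAbove_of_tendsto {x : ℕ → ℝ}
    (hx : Tendsto (fun k => ∑ i ∈ range k, x i) atTop atTop) :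
    ∃ M : ℕ, x ∈ partialSumsAbove (-M) := by
  obtain ⟨b, hb⟩ := bddBelow_range_of_tendsto_atTop_atTop hx
  obtain ⟨M, hM⟩ := exists_nat_gt (-b)
  exact ⟨M, fun k _ => by linarith [hb ⟨k, rfl⟩]⟩

theorem mem_partialSumsAbove_zero_of_shift {x : ℕ → ℝ} {m : ℕ} (hx : ∀ i : Fin m, 1 ≤ x i)
    (hshift : (fun i => x (m + i)) ∈ partialSumsAbove (-m)) : x ∈ partialSumsAbove 0 := by
  intro k hk
  rcases le_or_gt k m with hkm | hmk
  · calc (0 : ℝ) < k := by exact_mod_cast hk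
      _ = ∑ _i ∈ range k, (1 : ℝ) := by simp
      _ ≤ ∑ i ∈ range k, x i := sum_le_sum fun i hi => hx ⟨i, by grind⟩
  · obtain ⟨j, rfl⟩ := Nat.exists_eq_add_of_lt hmk
    have hhead : (m : ℝ) ≤ ∑ i ∈ range m, x i :=
      calc (m : ℝ) = ∑ _i ∈ range m, (1 : ℝ) := by simp
        _ ≤ ∑ i ∈ range m, x i := sum_le_sum fun i hi => hx ⟨i, mem_range.mp hi⟩
    have htail := hshift (j + 1) le_add_self
    rw [add_assoc, sum_range_add]
    linarith

namespace ProbabilityTheory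

variable {Ω ι β : Type*} {mΩ : MeasurableSpace Ω} {P : Measure Ω} [MeasurableSpace β]
  {X : ι → Ω → β}

theorem comap_pi_comp_le_iSup_comap {κ : Type*} (f : κ → ι) :
    MeasurableSpace.comap (fun ω k => X (f k) ω) inferInstance
      ≤ ⨆ i ∈ Set.range f, MeasurableSpace.comap (X i) inferInstance :=
  measurable_iff_comap_le.1 <| @measurable_pi_lambda _ _ _
    (⨆ i ∈ Set.range f, MeasurableSpace.comap (X i) inferInstance) _ _ fun k =>
      measurable_iff_comap_le.2 <|
        le_iSup₂ (f := fun i (_ : i ∈ Set.range f) => MeasurableSpace.comap (X i) inferInstance)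
          (f k) ⟨k, rfl⟩

theorem iIndepFun.indepFun_comp_of_disjoint_range {κ κ' : Type*} (hX : iIndepFun X P)
    (hmeas : ∀ i, Measurable (X i)) {f : κ → ι} {g : κ' → ι}
    (hfg : Disjoint (Set.range f) (Set.range g)) :
    IndepFun (fun ω k => X (f k) ω) (fun ω k => X (g k) ω) P := by
  rw [IndepFun_iff_Indep]
  exact indep_of_indep_of_le_right (indep_of_indep_of_le_left
    (indep_iSup_of_disjoint (fun i => (hmeas i).comap_le) hX hfg) (comap_pi_comp_le_iSup_comap f))
    (comap_pi_comp_le_iSup_comap g)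

theorem iIndepFun.map_comp_eq_of_identDistrib (hX : iIndepFun X P)
    (hmeas : ∀ i, Measurable (X i)) {i₀ : ι} (hident : ∀ i, IdentDistrib (X i) (X i₀) P P)
    {g : ι → ι} (hg : Function.Injective g) :
    P.map (fun ω i => X (g i) ω) = P.map (fun ω i => X i ω) := by
  rw [(hX.precomp hg).map_fun_eq_infinitePi_map (fun i => hmeas (g i)),
    hX.map_fun_eq_infinitePi_map hmeas]
  congr 1
  funext i
  rw [(hident (g i)).map_eq, (hident i).map_eq]

theorem iIndepFun.measure_preimage_univ_pi_pos [Fintype ι] (hX : iIndepFun X P)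
    {s : ι → Set β} (hs : ∀ i, MeasurableSet (s i)) (hpos : ∀ i, 0 < P (X i ⁻¹' s i)) :
    0 < P ((fun ω i => X i ω) ⁻¹' Set.univ.pi s) := by
  have hset : (fun ω i => X i ω) ⁻¹' Set.univ.pi s = ⋂ i ∈ univ, X i ⁻¹' s i := by ext; simp
  rw [hset, hX.measure_inter_preimage_eq_mul univ fun i _ => hs i]
  exact CanonicallyOrderedAdd.prod_pos.2 fun i _ => hpos i

theorem measure_partialSumsAbove_zero_pos {Z : ℕ → Ω → ℝ} (hmeas : ∀ i, Measurable (Z i))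
    (hindep : iIndepFun Z P) (hident : ∀ i, IdentDistrib (Z i) (Z 0) P P)
    (hpos : 0 < P {ω | 1 ≤ Z 0 ω}) {m : ℕ}
    (hm : 0 < P ((fun ω i => Z i ω) ⁻¹' partialSumsAbove (-m))) :
    0 < P ((fun ω i => Z i ω) ⁻¹' partialSumsAbove 0) := by
  set B := (fun ω (i : Fin m) => Z i ω) ⁻¹' Set.univ.pi fun _ => Set.Ici 1
  set C := (fun ω i => Z (m + i) ω) ⁻¹' partialSumsAbove (-m)
  have hB : 0 < P B := (hindep.precomp Fin.val_injective).measure_preimage_univ_pi_pos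
    (fun _ => measurableSet_Ici) fun i =>
      hpos.trans_eq ((hident i).measure_mem_eq measurableSet_Ici).symm
  have hC : P C = P ((fun ω i => Z i ω) ⁻¹' partialSumsAbove (-m)) := by
    rw [← Measure.map_apply (measurable_pi_lambda _ fun i => hmeas (m + i))
      (measurableSet_partialSumsAbove _),
      hindep.map_comp_eq_of_identDistrib hmeas hident (add_right_injective m),
      Measure.map_apply (measurable_pi_lambda _ hmeas) (measurableSet_partialSumsAbove _)]
  have hdisj : Disjoint (Set.range (Fin.val : Fin m → ℕ)) (Set.range (m + ·)) :=
    Set.disjoint_left.2 fun _ ⟨i, hi⟩ ⟨j, hj⟩ => by grind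
  have hBC : P (B ∩ C) = P B * P C :=
    (hindep.indepFun_comp_of_disjoint_range hmeas hdisj).measure_inter_preimage_eq_mul _ _
      (MeasurableSet.univ_pi fun _ => measurableSet_Ici) (measurableSet_partialSumsAbove _)
  calc 0 < P B * P C := ENNReal.mul_pos hB.ne' (hC ▸ hm).ne'
    _ = P (B ∩ C) := hBC.symm
    _ ≤ _ := measure_mono fun ω hω =>
      mem_partialSumsAbove_zero_of_shift (x := fun i => Z i ω) (fun i => hω.1 i trivial) hω.2

end ProbabilityTheory

theorem exists_measure_pos_of_ae_exists_mem {α ι : Type*} [MeasurableSpace α] [Countable ι]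
    {μ : Measure α} [NeZero μ] {s : ι → Set α} (h : ∀ᵐ x ∂μ, ∃ n, x ∈ s n) :
    ∃ n, 0 < μ (s n) := by
  refine exists_measure_pos_of_not_measure_iUnion_null fun hnull => ?_
  obtain ⟨x, ⟨n, hn⟩, hx⟩ := (h.and (measure_eq_zero_iff_ae_notMem.1 hnull)).exists
  exact hx (Set.mem_iUnion.2 ⟨n, hn⟩)

/-- If `(Z i)` is an i.i.d. sequence of integrable real random variables with
`E[Z 0] > 0` and `P(Z 0 ≥ 1) > 0`, then with positive probability all partial sums
`∑_{i<k} Z i` (for `k ≥ 1`) are strictly positive. -/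
theorem pos_prob_all_partial_sums_pos {Ω : Type*} [MeasureSpace Ω]
    [IsProbabilityMeasure (ℙ : Measure Ω)] (Z : ℕ → Ω → ℝ)
    (hmeas : ∀ i, Measurable (Z i))
    (hindep : iIndepFun Z ℙ)
    (hident : ∀ i, IdentDistrib (Z i) (Z 0) ℙ ℙ)
    (hint : Integrable (Z 0) ℙ)
    (hmean : 0 < ∫ ω, Z 0 ω ∂ℙ)
    (hpos : 0 < ℙ {ω | 1 ≤ Z 0 ω}) :
    0 < ℙ {ω | ∀ k : ℕ, 1 ≤ k → 0 < ∑ i ∈ Finset.range k, Z i ω} := by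
  have hbdd : ∀ᵐ ω, ∃ M : ℕ, (fun i => Z i ω) ∈ partialSumsAbove (-M) := by
    filter_upwards [strong_law_ae_real Z hint (fun i j hij => hindep.indepFun hij) hident]
      with ω hω
    exact exists_mem_partialSumsAbove_of_tendsto (tendsto_natCast_atTop_atTop.num hmean hω)
  obtain ⟨m, hm⟩ := exists_measure_pos_of_ae_exists_mem hbdd
  exact measure_partialSumsAbove_zero_pos hmeas hindep hident hpos hm
end
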